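/- If there exists a participant involved in every interaction of a global language L, then L is CUI. -/

import Mathlib

open scoped Classical

/-- Interactions `A→B:m` over participants and messages drawn from `ℕ`. -/
structure Interaction where
  snd : ℕ
  rcv : ℕ
  msg : ℕ
  ne : snd ≠ rcv

/-- Communication actions: outputs `AB!m` and inputs `AB?m`. -/
inductive Act where
  | out : ℕ → ℕ → ℕ → Act
  | inp : ℕ → ℕ → ℕ → Act
deriving DecidableEq

/-- Finite or infinite words over `σ`. -/
inductive Word (σ : Type) : Type where
  | fin : List σ → Word σ
  | inf : (ℕ → σ) → Word σ

namespace Word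

def get? {σ : Type} : Word σ → ℕ → Option σ
  | fin l, i => l[i]?
  | inf f, i => some (f i)

/-- Prefix relation on possibly infinite words. -/
def Pref {σ : Type} : Word σ → Word σ → Prop
  | fin l, fin l' => l <+: l'
  | fin l, inf g => ∀ i, i < l.length → l[i]? = some (g i)
  | inf f, inf g => f = g
  | inf _, fin _ => False

/-- Concatenation; if the first word is infinite the result is the first word. -/
def cat {σ : Type} : Word σ → Word σ → Word σ
  | fin l, fin l' => fin (l ++ l')
  | fin l, inf g => inf (fun i => if h : i < l.length then l.get ⟨i, h⟩ else g (i - l.length))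
  | inf f, _ => inf f

def Finite {σ : Type} : Word σ → Prop
  | fin _ => True
  | inf _ => False

end Word

/-- Prefix closure of a language. -/
def prefCl {σ : Type} (L : Set (Word σ)) : Set (Word σ) :=
  {z | ∃ z' ∈ L, Word.Pref z z'}

def PrefixClosed {σ : Type} (L : Set (Word σ)) : Prop := L = prefCl L

def iptp (a : Interaction) : Set ℕ := {a.snd, a.rcv}

def asubj : Act → ℕ
  | .out A _ _ => A
  | .inp _ B _ => B

def aptp : Act → Set ℕ
  | .out A B _ => {A, B}
  | .inp A B _ => {A, B}

/-- Participants of a word of interactions. -/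
def wptp (w : Word Interaction) : Set ℕ :=
  {X | ∃ i a, w.get? i = some a ∧ X ∈ iptp a}

/-- Participants of a language of interactions. -/
def lptp (L : Set (Word Interaction)) : Set ℕ :=
  {X | ∃ w ∈ L, X ∈ wptp w}

/-- Global language: prefix-closed with finitely many participants. -/
def IsGLang (L : Set (Word Interaction)) : Prop :=
  PrefixClosed L ∧ (lptp L).Finite

/-- Projection of an interaction on a participant. -/
def projI (X : ℕ) (a : Interaction) : Option Act :=
  if X = a.snd then some (.out a.snd a.rcv a.msg)
  else if X = a.rcv then some (.inp a.snd a.rcv a.msg)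
  else none

def projL (X : ℕ) (l : List Interaction) : List Act := l.filterMap (projI X)

/-- Projection of a (possibly infinite) word of interactions on a participant. -/
noncomputable def proj (X : ℕ) : Word Interaction → Word Act
  | .fin l => .fin (projL X l)
  | .inf f =>
    if {i | (projI X (f i)).isSome = true}.Infinite then
      .inf (fun n =>
        (projI X (f (Nat.nth (fun i => (projI X (f i)).isSome = true) n))).getD (.out 0 0 0))
    else
      .fin (projL X ((List.range (sSup {i | (projI X (f i)).isSome = true} + 1)).map f))

/-- A communicating system: a set of participants with a local language for each. -/
structure CSystem where
  P : Set ℕ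
  lang : ℕ → Set (Word Act)

/-- Well-formedness of a communicating system: finitely many participants, each
assigned a prefix-closed `X`-local language over the participants of the system,
different from `{ε}`. -/
def IsSystem (S : CSystem) : Prop :=
  S.P.Finite ∧ ∀ X ∈ S.P,
    PrefixClosed (S.lang X) ∧
    (∀ w ∈ S.lang X, ∀ i a, Word.get? w i = some a → asubj a = X ∧ aptp a ⊆ S.P) ∧
    S.lang X ≠ {Word.fin []}

/-- Synchronous semantics of a communicating system. -/
def sem (S : CSystem) : Set (Word Interaction) :=
  {w | wptp w ⊆ S.P ∧ ∀ X ∈ S.P, proj X w ∈ S.lang X}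

/-- Projection of a global language on a participant. -/
def projLang (X : ℕ) (L : Set (Word Interaction)) : Set (Word Act) := proj X '' L

/-- The communicating system projected from a global language. -/
noncomputable def projSys (L : Set (Word Interaction)) : CSystem :=
  ⟨lptp L, fun X => projLang X L⟩

/-- Synchronous semantics of the projected system, `⟦L↾⟧`. -/
noncomputable def gsem (L : Set (Word Interaction)) : Set (Word Interaction) :=
  sem (projSys L)

/-- Closure under unknown information. -/
def CUI (L : Set (Word Interaction)) : Prop :=
  ∀ (w1 w2 : List Interaction) (a : Interaction) (w : Word Interaction),
    Word.fin (w1 ++ [a]) ∈ L → Word.fin (w2 ++ [a]) ∈ L → w ∈ L →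
    proj a.snd w = proj a.snd (Word.fin w1) →
    proj a.rcv w = proj a.rcv (Word.fin w2) →
    w.cat (Word.fin [a]) ∈ L

/-- Continuity: an infinite word belongs to `L` whenever infinitely many of its
finite prefixes do. -/
def WContinuous {σ : Type} (L : Set (Word σ)) : Prop :=
  ∀ g : ℕ → σ,
    {l : List σ | Word.fin l ∈ L ∧ Word.Pref (Word.fin l) (Word.inf g)}.Infinite →
    Word.inf g ∈ L

/-- Standard-or-continuous language. -/
def SC (L : Set (Word Interaction)) : Prop :=
  (∀ w ∈ L, w.Finite) ∨ WContinuous L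

/-- Maximal word in a language. -/
def MaximalIn {σ : Type} (L : Set (Word σ)) (w : Word σ) : Prop :=
  w ∈ L ∧ ∀ w' ∈ L, Word.Pref w w' → w' = w

/-- Participant `X` distinguishes two words. -/
def Distinguishes (X : ℕ) (w1 w2 : Word Interaction) : Prop :=
  proj X w1 ≠ proj X w2 ∧
  ¬ (Word.Pref (proj X w1) (proj X w2) ∧ proj X w1 ≠ proj X w2) ∧
  ¬ (Word.Pref (proj X w2) (proj X w1) ∧ proj X w2 ≠ proj X w1)

/-- Branch-awareness of a global language. -/
def BranchAware (L : Set (Word Interaction)) : Prop :=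
  ∀ X ∈ lptp L, ∀ w1 w2, MaximalIn L w1 → MaximalIn L w2 →
    proj X w1 ≠ proj X w2 → Distinguishes X w1 w2

/-- Swapping two adjacent independent interactions. -/
inductive SwapStep : List Interaction → List Interaction → Prop
  | mk (u v : List Interaction) (a b : Interaction) (h : iptp a ∩ iptp b = ∅) :
      SwapStep (u ++ a :: b :: v) (u ++ b :: a :: v)

/-- Mazurkiewicz trace equivalence on finite words. -/
def TraceEqL : List Interaction → List Interaction → Prop :=
  Relation.ReflTransGen SwapStep

/-- `w ≪ w'` à la Gastin. -/
def wll (w w' : Word Interaction) : Prop :=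
  ∀ l : List Interaction, Word.Pref (Word.fin l) w →
    ∃ l' h : List Interaction, Word.Pref (Word.fin l') w' ∧ TraceEqL (l ++ h) l'

/-- Trace equivalence on possibly infinite words. -/
def TraceEq : Word Interaction → Word Interaction → Prop
  | .fin l, .fin l' => TraceEqL l l'
  | w, w' => wll w w' ∧ wll w' w

/-- Finite-state automata with states `Fin n`, all states accepting. -/
structure FSA (σ : Type) where
  n : ℕ
  q0 : Fin n
  tr : Fin n → σ → Fin n → Prop

inductive FinRun {σ : Type} (A : FSA σ) : Fin A.n → List σ → Fin A.n → Prop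
  | nil (q : Fin A.n) : FinRun A q [] q
  | cons {q q' q'' : Fin A.n} {a : σ} {l : List σ} :
      A.tr q a q' → FinRun A q' l q'' → FinRun A q (a :: l) q''

/-- The language of an FSA with all states accepting: finite words labelling runs
from the initial state, together with infinite words labelling infinite runs
(Büchi acceptance with all states accepting). -/
def LangSet {σ : Type} (A : FSA σ) : Set (Word σ) :=
  {w | match w with
       | .fin l => ∃ q, FinRun A A.q0 l q
       | .inf f => ∃ qs : ℕ → Fin A.n, qs 0 = A.q0 ∧ ∀ i, A.tr (qs i) (f i) (qs (i+1))}

/-- Configurations of a system of CFSMs. -/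
def Conf (M : ℕ → FSA Act) : Type := (X : ℕ) → Fin (M X).n

/-- A synchronisation step of the product automaton. -/
def PStep (P : Finset ℕ) (M : ℕ → FSA Act) (s : Conf M) (a : Interaction) (s' : Conf M) : Prop :=
  a.snd ∈ P ∧ a.rcv ∈ P ∧
  (M a.snd).tr (s a.snd) (Act.out a.snd a.rcv a.msg) (s' a.snd) ∧
  (M a.rcv).tr (s a.rcv) (Act.inp a.snd a.rcv a.msg) (s' a.rcv) ∧
  ∀ X, X ≠ a.snd → X ≠ a.rcv → s X = s' X

def initConf (M : ℕ → FSA Act) : Conf M := fun X => (M X).q0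

inductive PRun (P : Finset ℕ) (M : ℕ → FSA Act) : Conf M → List Interaction → Conf M → Prop
  | nil (s : Conf M) : PRun P M s [] s
  | cons {s s' s'' : Conf M} {a : Interaction} {l : List Interaction} :
      PStep P M s a s' → PRun P M s' l s'' → PRun P M s (a :: l) s''

/-- The language of the synchronous product automaton of a system of CFSMs. -/
def prodLang (P : Finset ℕ) (M : ℕ → FSA Act) : Set (Word Interaction) :=
  {w | match w with
       | .fin l => ∃ s, PRun P M (initConf M) l s
       | .inf f => ∃ cs : ℕ → Conf M, cs 0 = initConf M ∧
           ∀ i, PStep P M (cs i) (f i) (cs (i+1))}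

/-! If `X` takes part in every interaction, its projection (an injective relabelling of each
letter) loses no information, so `proj X` is injective on such words. In the CUI condition `X`
is the sender or the receiver of `a`, hence `w` coincides with `w1` or `w2`, and `w · a` is one
of the two words assumed to be in `L`. -/

def EveryLetterInvolves (X : ℕ) (w : Word Interaction) : Prop :=
  ∀ i a, w.get? i = some a → X ∈ iptp a

lemma everyLetterInvolves_fin_iff {X : ℕ} {l : List Interaction} :
    EveryLetterInvolves X (.fin l) ↔ ∀ a ∈ l, X ∈ iptp a := by
  simp only [EveryLetterInvolves, Word.get?, List.mem_iff_getElem?]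
  exact ⟨fun h a ⟨i, hi⟩ => h i a hi, fun h i a hi => h a ⟨i, hi⟩⟩

lemma projI_isSome_of_mem_iptp {X : ℕ} {a : Interaction} (h : X ∈ iptp a) :
    (projI X a).isSome := by
  rcases h with rfl | rfl
  · simp [projI]
  · simp [projI, a.ne.symm]

lemma projI_injOn (X : ℕ) : Set.InjOn (projI X) {a | X ∈ iptp a} := by
  rintro ⟨s, r, m, hsr⟩ ha ⟨s', r', m', hsr'⟩ hb h
  simp only [Set.mem_ofPred_eq, iptp, Set.mem_insert_iff, Set.mem_singleton_iff] at ha hb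
  rcases ha with rfl | rfl <;> rcases hb with h' | h' <;> subst h' <;>
    simp_all [projI, hsr.symm, hsr'.symm]

lemma List.filterMap_injOn {α β : Type*} {f : α → Option β} {s : Set α}
    (hsome : ∀ a ∈ s, (f a).isSome) (hinj : s.InjOn f) :
    {l : List α | ∀ a ∈ l, a ∈ s}.InjOn (List.filterMap f) := by
  intro l hl l' hl' h
  induction l generalizing l' with
  | nil =>
    cases l' with
    | nil => rfl
    | cons b t =>
      obtain ⟨c, hc⟩ := Option.isSome_iff_exists.mp (hsome b (hl' b List.mem_cons_self))
      simp [hc] at h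
  | cons a t ih =>
    obtain ⟨c, hc⟩ := Option.isSome_iff_exists.mp (hsome a (hl a List.mem_cons_self))
    cases l' with
    | nil => simp [hc] at h
    | cons b t' =>
      obtain ⟨c', hc'⟩ := Option.isSome_iff_exists.mp (hsome b (hl' b List.mem_cons_self))
      simp only [List.filterMap_cons, hc, hc', List.cons.injEq] at h
      obtain ⟨rfl, ht⟩ := h
      have hab : a = b :=
        hinj (hl a List.mem_cons_self) (hl' b List.mem_cons_self) (hc.trans hc'.symm)
      rw [hab, ih (fun x hx => hl x (List.mem_cons_of_mem a hx))
        (fun x hx => hl' x (List.mem_cons_of_mem b hx)) ht]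

lemma proj_inf_of_everyLetterInvolves {X : ℕ} {f : ℕ → Interaction}
    (hf : EveryLetterInvolves X (.inf f)) :
    proj X (.inf f) = .inf fun n => (projI X (f n)).getD (.out 0 0 0) := by
  have hsome : ∀ i, (projI X (f i)).isSome := fun i => projI_isSome_of_mem_iptp (hf i (f i) rfl)
  have hall : {i | (projI X (f i)).isSome = true} = Set.univ :=
    Set.eq_univ_of_forall hsome
  simp only [proj, hall, Set.infinite_univ, if_true, Nat.nth_of_forall fun i _ => hsome i]

lemma proj_injOn (X : ℕ) : {w | EveryLetterInvolves X w}.InjOn (proj X) := by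
  rintro (l | f) hw (l' | f') hw' h
  · simp only [proj, Word.fin.injEq] at h
    rw [List.filterMap_injOn (s := {a | X ∈ iptp a}) (fun _ => projI_isSome_of_mem_iptp)
      (projI_injOn X) (everyLetterInvolves_fin_iff.mp hw) (everyLetterInvolves_fin_iff.mp hw') h]
  · rw [proj_inf_of_everyLetterInvolves hw'] at h
    simp [proj] at h
  · rw [proj_inf_of_everyLetterInvolves hw] at h
    simp [proj] at h
  · rw [proj_inf_of_everyLetterInvolves hw, proj_inf_of_everyLetterInvolves hw'] at h
    congr 1
    funext n
    have hn := hw n (f n) rfl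
    have hn' := hw' n (f' n) rfl
    exact projI_injOn X hn hn' <| (Option.getD_inj (projI_isSome_of_mem_iptp hn)
      (projI_isSome_of_mem_iptp hn')).mp (congrFun (Word.inf.inj h) n)

theorem stmt13_general (L : Set (Word Interaction)) (X : ℕ)
    (hX : ∀ w ∈ L, ∀ i a, Word.get? w i = some a → X ∈ iptp a) : CUI L := by
  intro w1 w2 a w hw1 hw2 hw hsnd hrcv
  have hinv : ∀ {u}, Word.fin (u ++ [a]) ∈ L → EveryLetterInvolves X (.fin u) ∧ X ∈ iptp a :=
    fun hu => by
      simpa [everyLetterInvolves_fin_iff, or_imp, forall_and] using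
        everyLetterInvolves_fin_iff.mp (hX _ hu)
  have eq_of_proj : ∀ {u}, Word.fin (u ++ [a]) ∈ L → proj X w = proj X (.fin u) → w = .fin u :=
    fun hu h => proj_injOn X (hX w hw) (hinv hu).1 h
  rcases (hinv hw1).2 with rfl | rfl
  · rw [eq_of_proj hw1 hsnd]
    exact hw1
  · rw [eq_of_proj hw2 hrcv]
    exact hw2

/-- If some participant is involved in every interaction of `L`, then `L` is CUI. -/
theorem stmt13 (L : Set (Word Interaction)) (hL : IsGLang L) (X : ℕ)
    (hX : ∀ w ∈ L, ∀ i a, Word.get? w i = some a → X ∈ iptp a) : CUI L :=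
  stmt13_general L X hX
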